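/- Let g : ℝ^m → ℝ be smooth, let r ≥ 1, let x₀, …, x_r ∈ ℝ^m, let σ = [x₀,…,x_r] : Δ^r → ℝ^m be the associated affine simplex, and let 0 ≤ i, j ≤ r. Then ∫_{Δ^r} Dg(σ(t))(x_j − x_i) dμ_r(t) = r·( ∫_{Δ^{r−1}} g(∂_iσ(s)) dμ_{r−1}(s) − ∫_{Δ^{r−1}} g(∂_jσ(s)) dμ_{r−1}(s) ), where Dg denotes the (Fréchet) derivative of g and ∂_iσ = [x₀,…,x̂_i,…,x_r] is the affine simplex obtained by omitting x_i. -/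

import Mathlib

open MeasureTheory
open scoped ENNReal

noncomputable section

/-- The standard `r`-simplex `Δ^r = {t ∈ ℝ^r | tᵢ ≥ 0, ∑ tᵢ ≤ 1}`. -/
def stdSimplexSet (r : ℕ) : Set (Fin r → ℝ) := {t | (∀ i, 0 ≤ t i) ∧ ∑ i, t i ≤ 1}

/-- The normalized measure `μ_r` of total mass `1` on the standard `r`-simplex:
`r!` times Lebesgue measure restricted to `Δ^r` (for `r = 0` the point mass). -/
def simplexMeasure (r : ℕ) : Measure (Fin r → ℝ) :=
  (r.factorial : ℝ≥0∞) • (volume.restrict (stdSimplexSet r))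

/-- The affine map `[x₀,…,x_r] : Δ^r → E`, `t ↦ x₀ + ∑ᵢ tᵢ • (xᵢ − x₀)`, sending the
vertices of `Δ^r` to `x₀, …, x_r`. -/
def affineSimplexMap {E : Type*} [AddCommGroup E] [Module ℝ E] {r : ℕ}
    (x : Fin (r + 1) → E) (t : Fin r → ℝ) : E :=
  x 0 + ∑ i : Fin r, t i • (x i.succ - x 0)

namespace SimplexAux

/-! ### Barycentric coordinates -/

/-- Barycentric coordinates of `t`. -/
def bary {r : ℕ} (t : Fin r → ℝ) : Fin (r + 1) → ℝ := Fin.cons (1 - ∑ i, t i) t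

lemma bary_zero {r : ℕ} (t : Fin r → ℝ) : bary t 0 = 1 - ∑ i, t i := rfl

lemma bary_succ {r : ℕ} (t : Fin r → ℝ) (i : Fin r) : bary t i.succ = t i := by
  simp [bary]

lemma sum_bary {r : ℕ} (t : Fin r → ℝ) : ∑ j, bary t j = 1 := by
  rw [Fin.sum_univ_succ]
  simp [bary]

lemma affineSimplexMap_eq_bary {E : Type*} [AddCommGroup E] [Module ℝ E] {r : ℕ}
    (x : Fin (r + 1) → E) (t : Fin r → ℝ) :
    affineSimplexMap x t = ∑ j, bary t j • x j := by
  rw [Fin.sum_univ_succ, bary_zero]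
  simp only [bary_succ, affineSimplexMap, smul_sub, Finset.sum_sub_distrib, sub_smul, one_smul,
    ← Finset.sum_smul]
  abel

lemma mem_stdSimplexSet_iff_bary {r : ℕ} {t : Fin r → ℝ} :
    t ∈ stdSimplexSet r ↔ ∀ j, 0 ≤ bary t j := by
  constructor
  · rintro ⟨h1, h2⟩ j
    refine Fin.cases ?_ ?_ j
    · rw [bary_zero]; linarith
    · intro i; rw [bary_succ]; exact h1 i
  · intro h
    refine ⟨fun i => by simpa [bary_succ] using h i.succ, ?_⟩
    have := h 0
    rw [bary_zero] at this
    linarith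

/-! ### The barycentric action of vertex permutations -/

/-- The self-map of `ℝ^r` induced on barycentric coordinates by a permutation of the
vertices of the simplex. -/
def permMap {r : ℕ} (π : Equiv.Perm (Fin (r + 1))) (t : Fin r → ℝ) : Fin r → ℝ :=
  fun i => bary t (π⁻¹ i.succ)

lemma bary_permMap {r : ℕ} (π : Equiv.Perm (Fin (r + 1))) (t : Fin r → ℝ) :
    bary (permMap π t) = fun j => bary t (π⁻¹ j) := by
  funext j
  refine Fin.cases ?_ ?_ j
  · have h : ∑ j, bary t (π⁻¹ j) = 1 := by
      rw [Equiv.sum_comp π⁻¹ (bary t)]; exact sum_bary t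
    rw [Fin.sum_univ_succ] at h
    have h0 : bary (permMap π t) 0 = 1 - ∑ i, permMap π t i := bary_zero _
    rw [h0]
    simp only [permMap]
    linarith
  · intro i
    rw [bary_succ]
    rfl

lemma affineSimplexMap_comp_perm {E : Type*} [AddCommGroup E] [Module ℝ E] {r : ℕ}
    (x : Fin (r + 1) → E) (π : Equiv.Perm (Fin (r + 1))) (t : Fin r → ℝ) :
    affineSimplexMap (x ∘ π) t = affineSimplexMap x (permMap π t) := by
  rw [affineSimplexMap_eq_bary, affineSimplexMap_eq_bary, bary_permMap]
  rw [← Equiv.sum_comp π (fun j => bary t (π⁻¹ j) • x j)]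
  simp

lemma permMap_one {r : ℕ} : permMap (1 : Equiv.Perm (Fin (r + 1))) = id := by
  funext t i
  simp [permMap, bary]

lemma permMap_mul {r : ℕ} (π ρ : Equiv.Perm (Fin (r + 1))) (t : Fin r → ℝ) :
    permMap π (permMap ρ t) = permMap (π * ρ) t := by
  funext i
  show bary (permMap ρ t) (π⁻¹ i.succ) = bary t ((π * ρ)⁻¹ i.succ)
  rw [bary_permMap]
  simp [Equiv.Perm.mul_apply]

/-- Linear version of `bary`. -/
def lbary (r : ℕ) : (Fin r → ℝ) →ₗ[ℝ] (Fin (r + 1) → ℝ) where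
  toFun t := Fin.cons (- ∑ i, t i) t
  map_add' t s := by
    funext j
    refine Fin.cases ?_ ?_ j
    · simp [Finset.sum_add_distrib]; ring
    · intro i; simp
  map_smul' c t := by
    funext j
    refine Fin.cases ?_ ?_ j
    · simp [Finset.mul_sum]
    · intro i; simp

/-- The linear part of `permMap`. -/
def permLin {r : ℕ} (π : Equiv.Perm (Fin (r + 1))) : (Fin r → ℝ) →ₗ[ℝ] (Fin r → ℝ) :=
  (LinearMap.funLeft ℝ ℝ (fun i : Fin r => π⁻¹ i.succ)).comp (lbary r)

lemma bary_eq_lbary_add {r : ℕ} (t : Fin r → ℝ) (j : Fin (r + 1)) :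
    bary t j = lbary r t j + (Fin.cons (1:ℝ) (0 : Fin r → ℝ) : Fin (r+1) → ℝ) j := by
  refine Fin.cases ?_ ?_ j
  · show 1 - ∑ i, t i = (- ∑ i, t i) + 1 ; ring
  · intro i; show t i = t i + 0; ring

lemma permMap_eq_lin_add {r : ℕ} (π : Equiv.Perm (Fin (r + 1))) (t : Fin r → ℝ) :
    permMap π t = permLin π t + permMap π 0 := by
  funext i
  show bary t (π⁻¹ i.succ) = lbary r t (π⁻¹ i.succ) + bary 0 (π⁻¹ i.succ)
  rw [bary_eq_lbary_add]
  congr 1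
  refine Fin.cases ?_ ?_ (π⁻¹ i.succ)
  · show (1 : ℝ) = 1 - ∑ i : Fin r, (0:ℝ) ; simp
  · intro k; show (0:ℝ) = (0 : Fin r → ℝ) k ; rfl

lemma permLin_eq_sub {r : ℕ} (π : Equiv.Perm (Fin (r + 1))) (t : Fin r → ℝ) :
    permLin π t = permMap π t - permMap π 0 := by
  rw [permMap_eq_lin_add]; abel

lemma permLin_one {r : ℕ} : permLin (1 : Equiv.Perm (Fin (r + 1))) = LinearMap.id := by
  apply LinearMap.ext
  intro t
  rw [permLin_eq_sub, permMap_one]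
  simp

lemma permLin_mul {r : ℕ} (π ρ : Equiv.Perm (Fin (r + 1))) :
    (permLin π).comp (permLin ρ) = permLin (π * ρ) := by
  apply LinearMap.ext
  intro t
  have h1 : permLin (π * ρ) t = permMap (π * ρ) t - permMap (π * ρ) 0 := permLin_eq_sub _ _
  rw [← permMap_mul π ρ t, ← permMap_mul π ρ 0] at h1
  rw [permMap_eq_lin_add π (permMap ρ t), permMap_eq_lin_add π (permMap ρ 0)] at h1
  have h2 : permLin π (permMap ρ t) - permLin π (permMap ρ 0) =
      permLin π (permMap ρ t - permMap ρ 0) := (map_sub _ _ _).symm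
  rw [LinearMap.comp_apply, h1]
  rw [show permLin π (permMap ρ t) + permMap π 0 - (permLin π (permMap ρ 0) + permMap π 0)
      = permLin π (permMap ρ t) - permLin π (permMap ρ 0) by abel, h2, ← permLin_eq_sub ρ t]

lemma permLin_pow {r : ℕ} (π : Equiv.Perm (Fin (r + 1))) (k : ℕ) :
    permLin (π ^ k) = (permLin π) ^ k := by
  induction k with
  | zero => rw [pow_zero, pow_zero, permLin_one]; rfl
  | succ n ih =>
      rw [pow_succ, ← permLin_mul, ih, pow_succ]
      rfl

lemma abs_det_permLin {r : ℕ} (π : Equiv.Perm (Fin (r + 1))) :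
    |LinearMap.det (permLin π)| = 1 := by
  set k := orderOf π with hk
  have hkpos : k ≠ 0 := (orderOf_pos π).ne'
  have hpow : (permLin π) ^ k = LinearMap.id := by
    rw [← permLin_pow, pow_orderOf_eq_one, permLin_one]
  have hdet : (LinearMap.det (permLin π)) ^ k = 1 := by
    rw [← map_pow, hpow, LinearMap.det_id]
  rcases (pow_eq_one_iff_of_ne_zero hkpos).mp hdet with h | ⟨h, _⟩ <;> simp [h]

lemma measurePreserving_permLin {r : ℕ} (π : Equiv.Perm (Fin (r + 1))) :
    MeasurePreserving (permLin π) (volume : Measure (Fin r → ℝ)) volume := by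
  have hd : LinearMap.det (permLin π) ≠ 0 := by
    intro h
    have := abs_det_permLin π
    rw [h] at this; norm_num at this
  refine ⟨(LinearMap.continuous_of_finiteDimensional _).measurable, ?_⟩
  rw [Real.map_linearMap_volume_pi_eq_smul_volume_pi hd, abs_inv, abs_det_permLin]
  simp

lemma measurePreserving_permMap {r : ℕ} (π : Equiv.Perm (Fin (r + 1))) :
    MeasurePreserving (permMap π) (volume : Measure (Fin r → ℝ)) volume := by
  have h : permMap π = (fun y => y + permMap π 0) ∘ (permLin π) :=
    funext fun t => permMap_eq_lin_add π t
  rw [h]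
  exact (measurePreserving_add_right volume _).comp (measurePreserving_permLin π)

lemma continuous_permMap {r : ℕ} (π : Equiv.Perm (Fin (r + 1))) :
    Continuous (permMap π) := by
  have h : permMap π = (fun y => y + permMap π 0) ∘ (permLin π) :=
    funext fun t => permMap_eq_lin_add π t
  rw [h]
  exact (continuous_id.add continuous_const).comp (LinearMap.continuous_of_finiteDimensional _)

lemma injective_permMap {r : ℕ} (π : Equiv.Perm (Fin (r + 1))) :
    Function.Injective (permMap π) := by
  apply Function.LeftInverse.injective (g := permMap π⁻¹)
  intro t
  rw [permMap_mul, inv_mul_cancel, permMap_one, id]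

lemma permMap_preimage {r : ℕ} (π : Equiv.Perm (Fin (r + 1))) :
    permMap π ⁻¹' stdSimplexSet r = stdSimplexSet r := by
  ext t
  simp only [Set.mem_preimage, mem_stdSimplexSet_iff_bary, bary_permMap]
  constructor
  · intro h j
    simpa using h (π j)
  · intro h j
    exact h _

end SimplexAux

namespace SimplexAux

/-! ### Topology and measure of the standard simplex -/

lemma isClosed_stdSimplexSet (r : ℕ) : IsClosed (stdSimplexSet r) := by
  have : stdSimplexSet r = (⋂ i, {t : Fin r → ℝ | 0 ≤ t i}) ∩ {t : Fin r → ℝ | ∑ i, t i ≤ 1} := by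
    ext t; simp [stdSimplexSet, Set.mem_iInter]
  rw [this]
  exact IsClosed.inter (isClosed_iInter fun i =>
      isClosed_le continuous_const (continuous_apply i))
    (isClosed_le (continuous_finset_sum _ fun i _ => continuous_apply i) continuous_const)

lemma isCompact_stdSimplexSet (r : ℕ) : IsCompact (stdSimplexSet r) := by
  refine IsCompact.of_isClosed_subset (isCompact_Icc (a := (0 : Fin r → ℝ)) (b := 1))
    (isClosed_stdSimplexSet r) ?_
  intro t ht
  rw [Set.mem_Icc]
  constructor
  · intro i; exact ht.1 i
  · intro i
    calc t i ≤ ∑ j, t j :=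
          Finset.single_le_sum (fun j _ => ht.1 j) (Finset.mem_univ i)
      _ ≤ 1 := ht.2
      _ = (1 : Fin r → ℝ) i := rfl

lemma measurableSet_stdSimplexSet (r : ℕ) : MeasurableSet (stdSimplexSet r) :=
  (isClosed_stdSimplexSet r).measurableSet

lemma continuous_affineSimplexMap {E : Type*} [NormedAddCommGroup E] [NormedSpace ℝ E] {r : ℕ}
    (x : Fin (r + 1) → E) : Continuous (affineSimplexMap x) :=
  continuous_const.add (continuous_finset_sum _ fun i _ =>
    (continuous_apply (i : Fin r)).smul continuous_const)

/-! ### Permutation invariance of integrals over the simplex -/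

lemma integral_comp_perm {E : Type*} [NormedAddCommGroup E] [NormedSpace ℝ E] {r : ℕ}
    (x : Fin (r + 1) → E) (π : Equiv.Perm (Fin (r + 1))) (h : E → ℝ) :
    ∫ t, h (affineSimplexMap (x ∘ π) t) ∂(simplexMeasure r) =
      ∫ t, h (affineSimplexMap x t) ∂(simplexMeasure r) := by
  have hemb : MeasurableEmbedding (permMap (r := r) π) :=
    (continuous_permMap π).measurableEmbedding (injective_permMap π)
  have hmp : MeasurePreserving (permMap π) (volume.restrict (stdSimplexSet r))
      (volume.restrict (stdSimplexSet r)) := by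
    have := (measurePreserving_permMap π).restrict_preimage (measurableSet_stdSimplexSet r)
    rwa [permMap_preimage] at this
  simp only [simplexMeasure, integral_smul_measure]
  congr 1
  calc ∫ t, h (affineSimplexMap (x ∘ π) t) ∂(volume.restrict (stdSimplexSet r))
      = ∫ t, (fun s => h (affineSimplexMap x s)) (permMap π t)
          ∂(volume.restrict (stdSimplexSet r)) := by
        simp only [affineSimplexMap_comp_perm]
    _ = ∫ s, h (affineSimplexMap x s) ∂(volume.restrict (stdSimplexSet r)) :=
        hmp.integral_comp hemb (fun s => h (affineSimplexMap x s))

/-- Any injective map `Fin (n+1) → Fin (n+2)` avoiding `i` factors as `i.succAbove ∘ ρ`. -/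
lemma exists_perm_succAbove {n : ℕ} (i : Fin (n + 2)) (u : Fin (n + 1) → Fin (n + 2))
    (hu : Function.Injective u) (hi : ∀ t, u t ≠ i) :
    ∃ ρ : Equiv.Perm (Fin (n + 1)), u = i.succAbove ∘ ρ := by
  let e := finSuccAboveEquiv i
  let u' : Fin (n + 1) → { x : Fin (n + 2) // x ≠ i } := fun t => ⟨u t, hi t⟩
  have hu' : Function.Injective (e.symm ∘ u') := by
    intro a b hab
    have h2 : u' a = u' b := e.symm.injective hab
    exact hu (Subtype.mk_eq_mk.mp h2)
  have hbij : Function.Bijective (e.symm ∘ u') := Finite.injective_iff_bijective.mp hu'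
  refine ⟨Equiv.ofBijective _ hbij, ?_⟩
  funext t
  show u t = i.succAbove (e.symm (u' t))
  have : e (e.symm (u' t)) = u' t := e.apply_symm_apply _
  rw [finSuccAboveEquiv_apply] at this
  exact (congrArg Subtype.val this).symm

end SimplexAux

namespace SimplexAux

lemma sum_smul_sub {E : Type*} [AddCommGroup E] [Module ℝ E] {n : ℕ}
    (s : Fin n → ℝ) (y : Fin n → E) (z : E) :
    ∑ i, s i • (y i - z) = (∑ i, s i • y i) - (∑ i, s i) • z := by
  rw [Finset.sum_smul]
  rw [← Finset.sum_sub_distrib]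
  simp [smul_sub]

lemma affineSimplexMap_cons {E : Type*} [AddCommGroup E] [Module ℝ E] {n : ℕ}
    (x : Fin (n + 2) → E) (c : ℝ) (s : Fin n → ℝ) :
    affineSimplexMap x (Fin.cons c s) =
      c • (x 1 - x 0) + (x 0 + ∑ i : Fin n, s i • (x i.succ.succ - x 0)) := by
  show x 0 + ∑ i : Fin (n+1), (Fin.cons c s : Fin (n+1) → ℝ) i • (x i.succ - x 0) = _
  rw [Fin.sum_univ_succ]
  simp only [Fin.cons_zero, Fin.cons_succ, Fin.succ_zero_eq_one]
  abel

lemma cons_mem_stdSimplexSet_iff {n : ℕ} {c : ℝ} {s : Fin n → ℝ} :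
    Fin.cons c s ∈ stdSimplexSet (n + 1) ↔
      s ∈ stdSimplexSet n ∧ c ∈ Set.Icc 0 (1 - ∑ i, s i) := by
  constructor
  · rintro ⟨h1, h2⟩
    rw [Fin.sum_cons] at h2
    have hc : 0 ≤ c := by simpa using h1 0
    have hs : ∀ i, 0 ≤ s i := fun i => by simpa using h1 i.succ
    exact ⟨⟨hs, by linarith⟩, hc, by linarith⟩
  · rintro ⟨⟨hs, hsum⟩, hc0, hc1⟩
    refine ⟨fun i => ?_, ?_⟩
    · refine Fin.cases ?_ ?_ i
      · simpa using hc0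
      · intro i; simpa using hs i
    · rw [Fin.sum_cons]; linarith

lemma cons_zero_eq_faceOne {E : Type*} [AddCommGroup E] [Module ℝ E] {n : ℕ}
    (x : Fin (n + 2) → E) (s : Fin n → ℝ) :
    affineSimplexMap x (Fin.cons 0 s) =
      affineSimplexMap (x ∘ (1 : Fin (n + 2)).succAbove) s := by
  rw [affineSimplexMap_cons]
  show (0:ℝ) • (x 1 - x 0) + (x 0 + ∑ i : Fin n, s i • (x i.succ.succ - x 0)) =
    (x ∘ (1 : Fin (n + 2)).succAbove) 0
      + ∑ i : Fin n, s i • ((x ∘ (1 : Fin (n + 2)).succAbove) i.succ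
          - (x ∘ (1 : Fin (n + 2)).succAbove) 0)
  simp only [Function.comp_apply, Fin.one_succAbove_zero, Fin.one_succAbove_succ, zero_smul]
  abel

lemma cons_top_eq_faceZero {E : Type*} [AddCommGroup E] [Module ℝ E] {n : ℕ}
    (x : Fin (n + 2) → E) (s : Fin n → ℝ) :
    affineSimplexMap x (Fin.cons (1 - ∑ i, s i) s) =
      affineSimplexMap (x ∘ Fin.succ) s := by
  rw [affineSimplexMap_cons]
  show (1 - ∑ i, s i) • (x 1 - x 0) + (x 0 + ∑ i : Fin n, s i • (x i.succ.succ - x 0)) =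
    (x ∘ Fin.succ) 0 + ∑ i : Fin n, s i • ((x ∘ Fin.succ) i.succ - (x ∘ Fin.succ) 0)
  simp only [Function.comp_apply, Fin.succ_zero_eq_one]
  rw [sum_smul_sub, sum_smul_sub, sub_smul, one_smul, smul_sub]
  abel

end SimplexAux

namespace SimplexAux

variable {m : ℕ}

local notation "E" => EuclideanSpace ℝ (Fin m)


lemma continuous_cons_left {n : ℕ} (s : Fin n → ℝ) :
    Continuous (fun c : ℝ => (Fin.cons c s : Fin (n + 1) → ℝ)) := by
  apply continuous_pi
  intro i
  refine Fin.cases ?_ ?_ i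
  · simp only [Fin.cons_zero]; exact continuous_id
  · intro j; simp only [Fin.cons_succ]; exact continuous_const

lemma hasDerivAt_comp_cons {n : ℕ} (g : E → ℝ) (hg : ContDiff ℝ (⊤ : ℕ∞) g)
    (x : Fin (n + 2) → E) (s : Fin n → ℝ) (c : ℝ) :
    HasDerivAt (fun c : ℝ => g (affineSimplexMap x (Fin.cons c s)))
      (fderiv ℝ g (affineSimplexMap x (Fin.cons c s)) (x 1 - x 0)) c := by
  have hd : HasDerivAt (fun c : ℝ => affineSimplexMap x (Fin.cons c s)) (x 1 - x 0) c := by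
    simp only [affineSimplexMap_cons]
    simpa using ((hasDerivAt_id c).smul_const (x 1 - x 0)).add_const
      (x 0 + ∑ i : Fin n, s i • (x i.succ.succ - x 0))
  exact ((hg.differentiable (by simp) _).hasFDerivAt).comp_hasDerivAt c hd

lemma continuous_F {n : ℕ} (g : E → ℝ) (hg : ContDiff ℝ (⊤ : ℕ∞) g) (x : Fin (n + 2) → E) :
    Continuous (fun t : Fin (n + 1) → ℝ =>
      fderiv ℝ g (affineSimplexMap x t) (x 1 - x 0)) :=
  (((hg.continuous_fderiv (by simp)).comp
      (continuous_affineSimplexMap x)).clm_apply continuous_const)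

lemma inner_integral {n : ℕ} (g : E → ℝ) (hg : ContDiff ℝ (⊤ : ℕ∞) g)
    (x : Fin (n + 2) → E) (s : Fin n → ℝ) :
    ∫ c : ℝ, Set.indicator (stdSimplexSet (n + 1))
        (fun t => fderiv ℝ g (affineSimplexMap x t) (x 1 - x 0)) (Fin.cons c s) =
      Set.indicator (stdSimplexSet n)
        (fun s => g (affineSimplexMap (x ∘ Fin.succ) s) -
          g (affineSimplexMap (x ∘ (1 : Fin (n + 2)).succAbove) s)) s := by
  set F : (Fin (n + 1) → ℝ) → ℝ :=
    fun t => fderiv ℝ g (affineSimplexMap x t) (x 1 - x 0) with hF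
  by_cases hs : s ∈ stdSimplexSet n
  · have ha : (0:ℝ) ≤ 1 - ∑ i, s i := by
      have := hs.2; linarith
    have heq : ∀ c : ℝ, Set.indicator (stdSimplexSet (n + 1)) F (Fin.cons c s) =
        Set.indicator (Set.Icc 0 (1 - ∑ i, s i)) (fun c => F (Fin.cons c s)) c := by
      intro c
      by_cases hc : c ∈ Set.Icc 0 (1 - ∑ i, s i)
      · rw [Set.indicator_of_mem (cons_mem_stdSimplexSet_iff.mpr ⟨hs, hc⟩),
          Set.indicator_of_mem hc]
      · rw [Set.indicator_of_notMem (fun hmem => hc (cons_mem_stdSimplexSet_iff.mp hmem).2),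
          Set.indicator_of_notMem hc]
    rw [integral_congr_ae (Filter.Eventually.of_forall heq),
      integral_indicator measurableSet_Icc, integral_Icc_eq_integral_Ioc,
      ← intervalIntegral.integral_of_le ha]
    rw [intervalIntegral.integral_eq_sub_of_hasDerivAt
      (fun c _ => hasDerivAt_comp_cons g hg x s c)
      (((continuous_F g hg x).comp (continuous_cons_left s)).intervalIntegrable _ _)]
    rw [cons_top_eq_faceZero, cons_zero_eq_faceOne, Set.indicator_of_mem hs]
  · have heq : ∀ c : ℝ, Set.indicator (stdSimplexSet (n + 1)) F (Fin.cons c s) = 0 := by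
      intro c
      exact Set.indicator_of_notMem
        (fun hmem => hs (cons_mem_stdSimplexSet_iff.mp hmem).1) _
    rw [integral_congr_ae (Filter.Eventually.of_forall heq), integral_zero,
      Set.indicator_of_notMem hs]

end SimplexAux

namespace SimplexAux

variable {m : ℕ}

local notation "E" => EuclideanSpace ℝ (Fin m)

lemma key {n : ℕ} (g : E → ℝ) (hg : ContDiff ℝ (⊤ : ℕ∞) g) (x : Fin (n + 2) → E) :
    ∫ t, fderiv ℝ g (affineSimplexMap x t) (x 1 - x 0) ∂(simplexMeasure (n + 1)) =
      (n + 1 : ℝ) *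
        ((∫ s, g (affineSimplexMap (x ∘ Fin.succ) s) ∂(simplexMeasure n)) -
          ∫ s, g (affineSimplexMap (x ∘ (1 : Fin (n + 2)).succAbove) s) ∂(simplexMeasure n)) := by
  set F : (Fin (n + 1) → ℝ) → ℝ :=
    fun t => fderiv ℝ g (affineSimplexMap x t) (x 1 - x 0) with hF
  set G : (Fin (n + 1) → ℝ) → ℝ := Set.indicator (stdSimplexSet (n + 1)) F with hG
  have hmeas1 := measurableSet_stdSimplexSet (n + 1)
  have hIntG : Integrable G volume := by
    rw [hG, integrable_indicator_iff hmeas1]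
    exact ((continuous_F g hg x).continuousOn).integrableOn_compact (isCompact_stdSimplexSet _)
  set e := MeasurableEquiv.piFinSuccAbove (fun _ : Fin (n + 1) => ℝ) 0 with he
  have hmp : MeasurePreserving e.symm volume volume :=
    (volume_preserving_piFinSuccAbove (fun _ : Fin (n + 1) => ℝ) 0).symm e
  have hsymm : ∀ p : ℝ × (Fin n → ℝ), e.symm p = Fin.cons p.1 p.2 := by
    intro p
    rw [he, MeasurableEquiv.piFinSuccAbove_symm_apply]
    exact Fin.insertNth_zero' p.1 p.2
  -- the inner step: integral over the simplex equals iterated integral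
  have step1 : ∫ t, F t ∂(volume.restrict (stdSimplexSet (n + 1))) =
      ∫ s, ∫ c, G (Fin.cons c s) ∂(volume : Measure ℝ) ∂(volume : Measure (Fin n → ℝ)) := by
    rw [← integral_indicator hmeas1, ← hG]
    rw [← hmp.integral_comp' (f := e.symm) G]
    have hGe : ∀ p : ℝ × (Fin n → ℝ), G (e.symm p) = G (Fin.cons p.1 p.2) := fun p => by
      rw [hsymm]
    rw [integral_congr_ae (Filter.Eventually.of_forall hGe)]
    have hInt2 : Integrable (fun p : ℝ × (Fin n → ℝ) => G (Fin.cons p.1 p.2))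
        ((volume : Measure ℝ).prod (volume : Measure (Fin n → ℝ))) := by
      have := (hmp.integrable_comp_emb e.symm.measurableEmbedding (g := G)).mpr hIntG
      have heq : (G ∘ e.symm) = fun p : ℝ × (Fin n → ℝ) => G (Fin.cons p.1 p.2) :=
        funext fun p => by simp [Function.comp, hGe p]
      rw [heq] at this
      rwa [Measure.volume_eq_prod] at this
    rw [Measure.volume_eq_prod]
    exact integral_prod_symm _ hInt2
  -- compute the inner integral
  have step2 : ∫ s, ∫ c, G (Fin.cons c s) ∂(volume : Measure ℝ)
        ∂(volume : Measure (Fin n → ℝ)) =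
      (∫ s, g (affineSimplexMap (x ∘ Fin.succ) s)
          ∂(volume.restrict (stdSimplexSet n))) -
        ∫ s, g (affineSimplexMap (x ∘ (1 : Fin (n + 2)).succAbove) s)
          ∂(volume.restrict (stdSimplexSet n)) := by
    have h1 : ∀ s : Fin n → ℝ, ∫ c, G (Fin.cons c s) ∂(volume : Measure ℝ) =
        Set.indicator (stdSimplexSet n)
          (fun s => g (affineSimplexMap (x ∘ Fin.succ) s) -
            g (affineSimplexMap (x ∘ (1 : Fin (n + 2)).succAbove) s)) s :=
      fun s => inner_integral g hg x s
    rw [integral_congr_ae (Filter.Eventually.of_forall h1),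
      integral_indicator (measurableSet_stdSimplexSet n)]
    have hA : IntegrableOn (fun s => g (affineSimplexMap (x ∘ Fin.succ) s))
        (stdSimplexSet n) volume :=
      ((hg.continuous.comp (continuous_affineSimplexMap _)).continuousOn).integrableOn_compact
        (isCompact_stdSimplexSet n)
    have hB : IntegrableOn
        (fun s => g (affineSimplexMap (x ∘ (1 : Fin (n + 2)).succAbove) s))
        (stdSimplexSet n) volume :=
      ((hg.continuous.comp (continuous_affineSimplexMap _)).continuousOn).integrableOn_compact
        (isCompact_stdSimplexSet n)
    exact integral_sub hA hB
  -- assemble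
  simp only [simplexMeasure, integral_smul_measure]
  rw [step1, step2]
  have h1 : ((((n + 1).factorial : ℝ≥0∞)).toReal : ℝ) = ((n + 1).factorial : ℝ) := by
    simp
  have h2 : (((n.factorial : ℝ≥0∞)).toReal : ℝ) = (n.factorial : ℝ) := by simp
  rw [h1, h2]
  rw [Nat.factorial_succ]
  simp only [smul_eq_mul]
  push_cast
  ring

end SimplexAux

open SimplexAux in
theorem integral_fderiv_affineSimplexMap
    {m : ℕ} (g : EuclideanSpace ℝ (Fin m) → ℝ) (hg : ContDiff ℝ (⊤ : ℕ∞) g)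
    (n : ℕ) (x : Fin (n + 2) → EuclideanSpace ℝ (Fin m)) (i j : Fin (n + 2)) :
    ∫ t, fderiv ℝ g (affineSimplexMap x t) (x j - x i) ∂(simplexMeasure (n + 1)) =
      (n + 1 : ℝ) *
        ((∫ s, g (affineSimplexMap (x ∘ i.succAbove) s) ∂(simplexMeasure n)) -
          ∫ s, g (affineSimplexMap (x ∘ j.succAbove) s) ∂(simplexMeasure n)) := by
  classical
  by_cases hij : i = j
  · subst hij
    simp
  · set j' := Equiv.swap (0 : Fin (n + 2)) i j with hj'
    have hj'0 : j' ≠ 0 := by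
      intro h
      apply hij
      have h2 : Equiv.swap (0 : Fin (n + 2)) i j' = j := Equiv.swap_apply_self _ _ _
      rw [h, Equiv.swap_apply_left] at h2
      exact h2.symm ▸ rfl
    set π : Equiv.Perm (Fin (n + 2)) :=
      (Equiv.swap (1 : Fin (n + 2)) j').trans (Equiv.swap (0 : Fin (n + 2)) i) with hπ
    have hπ0 : π 0 = i := by
      have h1 : Equiv.swap (1 : Fin (n + 2)) j' 0 = 0 :=
        Equiv.swap_apply_of_ne_of_ne (by simp) (Ne.symm hj'0)
      show Equiv.swap (0 : Fin (n + 2)) i (Equiv.swap (1 : Fin (n + 2)) j' 0) = i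
      rw [h1, Equiv.swap_apply_left]
    have hπ1 : π 1 = j := by
      show Equiv.swap (0 : Fin (n + 2)) i (Equiv.swap (1 : Fin (n + 2)) j' 1) = j
      rw [Equiv.swap_apply_left, hj', Equiv.swap_apply_self]
    have hkey := key g hg (x ∘ π)
    -- rewrite the direction vector
    have hvec : (x ∘ π) 1 - (x ∘ π) 0 = x j - x i := by
      simp only [Function.comp_apply, hπ0, hπ1]
    rw [hvec] at hkey
    -- rewrite the left-hand side using permutation invariance
    rw [integral_comp_perm x π (fun p => fderiv ℝ g p (x j - x i))] at hkey
    -- first face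
    obtain ⟨ρ₁, hρ₁⟩ : ∃ ρ : Equiv.Perm (Fin (n + 1)), (π ∘ Fin.succ) = i.succAbove ∘ ρ := by
      apply exists_perm_succAbove i (π ∘ Fin.succ)
        (π.injective.comp (Fin.succ_injective _))
      intro t ht
      have : π t.succ = π 0 := by
        rw [hπ0]; exact ht
      exact Fin.succ_ne_zero t (π.injective this)
    have hface1 : (x ∘ π) ∘ Fin.succ = (x ∘ i.succAbove) ∘ ρ₁ := by
      rw [Function.comp_assoc, hρ₁]
      rfl
    -- second face
    obtain ⟨ρ₂, hρ₂⟩ : ∃ ρ : Equiv.Perm (Fin (n + 1)),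
        (π ∘ (1 : Fin (n + 2)).succAbove) = j.succAbove ∘ ρ := by
      apply exists_perm_succAbove j (π ∘ (1 : Fin (n + 2)).succAbove)
        (π.injective.comp (Fin.succAbove_right_injective))
      intro t ht
      have : π ((1 : Fin (n + 2)).succAbove t) = π 1 := by
        rw [hπ1]; exact ht
      exact Fin.succAbove_ne (1 : Fin (n + 2)) t (π.injective this)
    have hface2 : (x ∘ π) ∘ (1 : Fin (n + 2)).succAbove = (x ∘ j.succAbove) ∘ ρ₂ := by
      rw [Function.comp_assoc, hρ₂]
      rfl
    rw [hface1, hface2, integral_comp_perm (x ∘ i.succAbove) ρ₁ g,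
      integral_comp_perm (x ∘ j.succAbove) ρ₂ g] at hkey
    exact hkey
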